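/- arXiv:1210.3231 — 7 statements merged into one kernel-verified Lean document; each statement's English description precedes it below -/
import Mathlib

section
/- Let p be a homogeneous polynomial in d variables with real coefficients. Then p is stable (i.e., nonvanishing on the open upper half-plane polydomain) if and only if p is hyperbolic in direction ξ for every vector ξ ∈ ℝ^d all of whose coordinates are strictly positive. -/
open MvPolynomial Complex

lemma aeval_smul_homog {d m : ℕ} {p : MvPolynomial (Fin d) ℝ} (hp : p.IsHomogeneous m)
    (c : ℂ) (z : Fin d → ℂ) :
    MvPolynomial.aeval (fun j => c * z j) p = c ^ m * MvPolynomial.aeval z p := by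
  rw [aeval_def, aeval_def, eval₂_eq, eval₂_eq, Finset.mul_sum]
  apply Finset.sum_congr rfl
  intro D hD
  rw [mem_support_iff] at hD
  have hw : ∑ i ∈ D.support, D i = m := by
    simpa [Finsupp.weight_apply, Finsupp.sum, Pi.one_apply] using hp hD
  simp_rw [mul_pow]
  rw [Finset.prod_mul_distrib, Finset.prod_pow_eq_pow_sum, hw]
  ring

/-- **Proposition (stability ↔ hyperbolicity in all positive directions).**
A real homogeneous polynomial `p` in `d` variables is stable (nonvanishing whenever all
coordinates have strictly positive imaginary part) if and only if it is hyperbolic in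
direction `ξ` (i.e. `p(ξ + i y) ≠ 0` for all real `y`) for every `ξ` with all
coordinates strictly positive. -/
theorem stmt0 (d m : ℕ) (p : MvPolynomial (Fin d) ℝ) (hp : p.IsHomogeneous m) :
    (∀ z : Fin d → ℂ, (∀ j, 0 < (z j).im) → MvPolynomial.aeval z p ≠ 0) ↔
      (∀ ξ : Fin d → ℝ, (∀ j, 0 < ξ j) →
        ∀ y : Fin d → ℝ,
          MvPolynomial.aeval (fun j => (ξ j : ℂ) + Complex.I * (y j : ℂ)) p ≠ 0) := by
  constructor
  · intro hstab ξ hξ y hzero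
    have key := aeval_smul_homog hp Complex.I (fun j => (ξ j : ℂ) + Complex.I * (y j : ℂ))
    rw [hzero, mul_zero] at key
    refine hstab _ (fun j => ?_) key
    simp [Complex.add_im, Complex.mul_im]
    exact hξ j
  · intro hhyp z hz hzero
    have key := aeval_smul_homog hp (-Complex.I) z
    have hne : ((-Complex.I) ^ m : ℂ) ≠ 0 := pow_ne_zero _ (by simp [Complex.I_ne_zero])
    have h2 : MvPolynomial.aeval (fun j => -Complex.I * z j) p = 0 := by
      rw [key, hzero, mul_zero]
    have := hhyp (fun j => (z j).im) hz (fun j => -(z j).re)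
    refine this ?_
    have e : (fun j => ((z j).im : ℂ) + Complex.I * ((-(z j).re : ℝ) : ℂ))
        = fun j => -Complex.I * z j := by
      funext j
      push_cast
      conv_rhs => rw [← Complex.re_add_im (z j)]
      ring_nf
      rw [Complex.I_sq]
      ring
    rw [e]
    exact h2
end

section
/- Let x ∈ ℝ^d. (i) If p and q are homogeneous polynomials in d variables hyperbolic in direction x, then the product p·q is hyperbolic in direction x. (ii) If p is homogeneous of degree m and hyperbolic in direction x, and p(y + t x) = Σ_{k=0}^m p_k(y) t^k where each p_k is a homogeneous polynomial of degree m − k in y, then every p_k (0 ≤ k ≤ m) is hyperbolic in direction x. -/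
/-!
For real `y`, a polynomial `p` that is homogeneous and hyperbolic in direction `x` restricts to a
polynomial `t ↦ p (y + t x)` whose roots are all real, since at `t = a + i b` with `b ≠ 0` the point
`y + t x` is `i b (x + i w)` for a real `w`. The expansion coefficients are the Taylor
coefficients of this restriction: `p_k (y + s x)` is the `k`-th Hasse derivative evaluated at `s`.
By Gauss–Lucas, derivatives of real-rooted polynomials are real-rooted; and the Hasse derivatives do
not vanish because the leading coefficient is `p x ≠ 0`. So `p_k (y + z x) ≠ 0` for nonreal `z`,
which for the homogeneous `p_k` is hyperbolicity again. Products are immediate.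
-/

open Polynomial

namespace Polynomial

theorem im_eq_zero_of_isRoot_derivative {P : ℂ[X]} (hP : ∀ z, P.IsRoot z → z.im = 0)
    (hP' : derivative P ≠ 0) {z : ℂ} (hz : (derivative P).IsRoot z) : z.im = 0 := by
  have hdeg : 0 < P.degree := natDegree_pos_iff_degree_pos.mp <|
    Nat.pos_of_ne_zero (derivative_ne_zero.mp hP')
  have hreal : convexHull ℝ (P.rootSet ℂ) ⊆ {w : ℂ | w.im = 0} :=
    convexHull_min (fun w hw => hP w (by simpa using (mem_rootSet.mp hw).2))
      (convex_hyperplane Complex.imLm.isLinear 0)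
  exact hreal <| rootSet_derivative_subset_convexHull_rootSet hdeg <|
    mem_rootSet.mpr ⟨hP', by simpa using hz⟩

theorem im_eq_zero_of_isRoot_iterate_derivative {P : ℂ[X]} (hP : ∀ z, P.IsRoot z → z.im = 0) :
    ∀ k, derivative^[k] P ≠ 0 → ∀ z, (derivative^[k] P).IsRoot z → z.im = 0
  | 0, _ => hP
  | k + 1, hk => by
    rw [Function.iterate_succ_apply'] at hk ⊢
    have hk' : derivative^[k] P ≠ 0 := fun h => hk (by rw [h, derivative_zero])
    exact fun z => im_eq_zero_of_isRoot_derivative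
      (im_eq_zero_of_isRoot_iterate_derivative hP k hk') hk

theorem im_eq_zero_of_isRoot_hasseDeriv {P : ℂ[X]} (hP : ∀ z, P.IsRoot z → z.im = 0) (k : ℕ)
    (hk : hasseDeriv k P ≠ 0) {z : ℂ} (hz : (hasseDeriv k P).IsRoot z) : z.im = 0 := by
  have hiter : derivative^[k] P = (k.factorial : ℂ[X]) * hasseDeriv k P := by
    rw [← factorial_smul_hasseDeriv, LinearMap.smul_apply, nsmul_eq_mul]
  have hfac : (k.factorial : ℂ[X]) ≠ 0 := by exact_mod_cast k.factorial_ne_zero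
  refine im_eq_zero_of_isRoot_iterate_derivative hP k (hiter ▸ mul_ne_zero hfac hk) z ?_
  rw [hiter, IsRoot, eval_mul, hz.eq_zero, mul_zero]

end Polynomial

namespace MvPolynomial

variable {σ : Type*}

theorem IsHomogeneous.eval_smul {R : Type*} [CommSemiring R] {φ : MvPolynomial σ R} {n : ℕ}
    (hφ : φ.IsHomogeneous n) (c : R) (w : σ → R) : eval (c • w) φ = c ^ n * eval w φ := by
  rw [eval_eq, eval_eq, Finset.mul_sum]
  refine Finset.sum_congr rfl fun s hs => ?_
  have hdeg : ∑ j ∈ s.support, s j = n := by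
    simpa [Finsupp.weight_apply, Finsupp.sum] using hφ (mem_support_iff.mp hs)
  simp only [Pi.smul_apply, smul_eq_mul, mul_pow, Finset.prod_mul_distrib,
    Finset.prod_pow_eq_pow_sum, hdeg]
  ring

def IsHyperbolic (p : MvPolynomial σ ℂ) (x : σ → ℝ) : Prop :=
  ∀ y : σ → ℝ, eval (fun j => (x j : ℂ) + Complex.I * (y j : ℂ)) p ≠ 0

theorem IsHyperbolic.mul {p q : MvPolynomial σ ℂ} {x : σ → ℝ} (hp : p.IsHyperbolic x)
    (hq : q.IsHyperbolic x) : (p * q).IsHyperbolic x := fun y => by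
  rw [map_mul]
  exact mul_ne_zero (hp y) (hq y)

theorem IsHomogeneous.isHyperbolic_iff {p : MvPolynomial σ ℂ} {n : ℕ} (hp : p.IsHomogeneous n)
    {x : σ → ℝ} : p.IsHyperbolic x ↔
      ∀ (y : σ → ℝ) (z : ℂ), z.im ≠ 0 → eval (fun j => (y j : ℂ) + z * x j) p ≠ 0 := by
  constructor
  · intro h y z hz
    have hline : (fun j => (y j : ℂ) + z * x j) = ((z.im : ℂ) * Complex.I) •
        fun j => (x j : ℂ) + Complex.I * ((-(y j + z.re * x j) / z.im : ℝ) : ℂ) := by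
      have hz' : (z.im : ℂ) ≠ 0 := Complex.ofReal_ne_zero.mpr hz
      funext j
      simp only [Pi.smul_apply, smul_eq_mul]
      push_cast
      field_simp
      linear_combination (x j : ℂ) * (Complex.re_add_im z).symm +
        ((y j : ℂ) + x j * z.re) * Complex.I_sq
    rw [hline, hp.eval_smul]
    exact mul_ne_zero (pow_ne_zero _ (mul_ne_zero (by exact_mod_cast hz) Complex.I_ne_zero)) (h _)
  · intro h y
    have hline : (fun j => (x j : ℂ) + Complex.I * (y j : ℂ)) =
        Complex.I • fun j => (y j : ℂ) + -Complex.I * x j := by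
      funext j
      simp only [Pi.smul_apply, smul_eq_mul]
      linear_combination (x j : ℂ) * Complex.I_sq
    rw [hline, hp.eval_smul]
    exact mul_ne_zero (pow_ne_zero _ Complex.I_ne_zero) (h y _ (by simp))

section Expansion

variable {x : σ → ℝ} {m : ℕ} {p : MvPolynomial σ ℂ} {pk : ℕ → MvPolynomial σ ℂ}

/-- The polynomial `t ↦ p (w + t x)` when `pk` are the coefficients of its expansion. -/
noncomputable def expansionPoly (pk : ℕ → MvPolynomial σ ℂ) (m : ℕ) (w : σ → ℂ) : ℂ[X] :=
  ∑ k ∈ Finset.range (m + 1), Polynomial.C (eval w (pk k)) * Polynomial.X ^ k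

theorem coeff_expansionPoly {k : ℕ} (hk : k ≤ m) (w : σ → ℂ) :
    (expansionPoly pk m w).coeff k = eval w (pk k) := by
  simp [expansionPoly, Polynomial.finsetSum_coeff, Nat.lt_succ_of_le hk]

variable (hexp : ∀ (w : σ → ℂ) (t : ℂ),
  eval (fun j => w j + t * x j) p = ∑ k ∈ Finset.range (m + 1), eval w (pk k) * t ^ k)
include hexp

theorem eval_expansionPoly (w : σ → ℂ) (t : ℂ) :
    (expansionPoly pk m w).eval t = eval (fun j => w j + t * x j) p := by
  simp [hexp, expansionPoly, Polynomial.eval_finsetSum]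

theorem expansionPoly_add_mul (w : σ → ℂ) (s : ℂ) :
    expansionPoly pk m (fun j => w j + s * x j) = taylor s (expansionPoly pk m w) :=
  Polynomial.funext fun t => by
    rw [eval_expansionPoly hexp, taylor_eval, eval_expansionPoly hexp]
    congr 2
    funext j
    ring

theorem eval_add_mul_eq_eval_hasseDeriv {k : ℕ} (hk : k ≤ m) (w : σ → ℂ) (s : ℂ) :
    eval (fun j => w j + s * x j) (pk k) = (hasseDeriv k (expansionPoly pk m w)).eval s := by
  rw [← coeff_expansionPoly hk, expansionPoly_add_mul hexp, taylor_coeff]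

theorem coeff_expansionPoly_self (hp : p.IsHomogeneous m) (hpm : (pk m).IsHomogeneous 0)
    (w : σ → ℂ) : (expansionPoly pk m w).coeff m = eval (fun j => (x j : ℂ)) p := by
  have hzero : expansionPoly pk m 0 =
      Polynomial.C (eval (fun j => (x j : ℂ)) p) * Polynomial.X ^ m :=
    Polynomial.funext fun t => by
      rw [eval_expansionPoly hexp, Polynomial.eval_mul, Polynomial.eval_C, Polynomial.eval_pow,
        Polynomial.eval_X, mul_comm, ← hp.eval_smul]
      congr 2
      funext j
      simp
  rw [coeff_expansionPoly le_rfl, ← one_mul (eval w (pk m)), ← pow_zero (0 : ℂ),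
    ← hpm.eval_smul, zero_smul, ← coeff_expansionPoly le_rfl, hzero]
  simp

theorem hasseDeriv_expansionPoly_ne_zero (hp : p.IsHomogeneous m)
    (hpm : (pk m).IsHomogeneous 0) (hx : eval (fun j => (x j : ℂ)) p ≠ 0) {k : ℕ} (hk : k ≤ m)
    (w : σ → ℂ) : hasseDeriv k (expansionPoly pk m w) ≠ 0 := by
  intro h
  have h' := congrArg (Polynomial.coeff · (m - k)) h
  simp only [hasseDeriv_coeff, Nat.sub_add_cancel hk, coeff_expansionPoly_self hexp hp hpm,
    Polynomial.coeff_zero] at h'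
  exact mul_ne_zero (Nat.cast_ne_zero.mpr (Nat.choose_pos hk).ne') hx h'

theorem IsHyperbolic.expansion_coeff (hp : p.IsHyperbolic x) (hhom : p.IsHomogeneous m)
    (hpk : ∀ k ≤ m, (pk k).IsHomogeneous (m - k)) {k : ℕ} (hk : k ≤ m) :
    (pk k).IsHyperbolic x := by
  have hpm : (pk m).IsHomogeneous 0 := by simpa using hpk m le_rfl
  have hx : eval (fun j => (x j : ℂ)) p ≠ 0 := by simpa using hp 0
  rw [(hpk k hk).isHyperbolic_iff]
  intro y z hz h0
  set F := expansionPoly pk m (fun j => (y j : ℂ))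
  have hF : ∀ z, F.IsRoot z → z.im = 0 := fun z hFz => by
    by_contra him
    exact hhom.isHyperbolic_iff.mp hp y z him (by rwa [← eval_expansionPoly hexp])
  rw [eval_add_mul_eq_eval_hasseDeriv hexp hk] at h0
  exact hz (im_eq_zero_of_isRoot_hasseDeriv hF k
    (hasseDeriv_expansionPoly_ne_zero hexp hhom hpm hx hk _) h0)

end Expansion

end MvPolynomial

/-- **Proposition (products and polarization preserve hyperbolicity).**
Fix `x ∈ ℝ^d`.  (i) If homogeneous polynomials `p, q` are hyperbolic in direction `x`,
then so is `p * q`.  (ii) If `p` is homogeneous of degree `m`, hyperbolic in direction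
`x`, and `p(y + t x) = ∑_{k=0}^m p_k(y) t^k` with each `p_k` homogeneous of degree
`m - k`, then every `p_k` with `k ≤ m` is hyperbolic in direction `x`. -/
theorem stmt2 (d : ℕ) (x : Fin d → ℝ) :
    (∀ (mp mq : ℕ) (p q : MvPolynomial (Fin d) ℂ),
      p.IsHomogeneous mp → q.IsHomogeneous mq →
      (∀ y : Fin d → ℝ,
        MvPolynomial.eval (fun j => (x j : ℂ) + Complex.I * (y j : ℂ)) p ≠ 0) →
      (∀ y : Fin d → ℝ,
        MvPolynomial.eval (fun j => (x j : ℂ) + Complex.I * (y j : ℂ)) q ≠ 0) →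
      (∀ y : Fin d → ℝ,
        MvPolynomial.eval (fun j => (x j : ℂ) + Complex.I * (y j : ℂ)) (p * q) ≠ 0)) ∧
    (∀ (m : ℕ) (p : MvPolynomial (Fin d) ℂ) (pk : ℕ → MvPolynomial (Fin d) ℂ),
      p.IsHomogeneous m →
      (∀ y : Fin d → ℝ,
        MvPolynomial.eval (fun j => (x j : ℂ) + Complex.I * (y j : ℂ)) p ≠ 0) →
      (∀ k, k ≤ m → (pk k).IsHomogeneous (m - k)) →
      (∀ (y : Fin d → ℂ) (t : ℂ),
        MvPolynomial.eval (fun j => y j + t * (x j : ℂ)) p =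
          ∑ k ∈ Finset.range (m + 1), MvPolynomial.eval y (pk k) * t ^ k) →
      ∀ k, k ≤ m → ∀ y : Fin d → ℝ,
        MvPolynomial.eval (fun j => (x j : ℂ) + Complex.I * (y j : ℂ)) (pk k) ≠ 0) := by
  exact ⟨fun _ _ _ _ _ _ hp hq => MvPolynomial.IsHyperbolic.mul hp hq,
    fun _ _ _ hhom hp hpk hexp _ hk => MvPolynomial.IsHyperbolic.expansion_coeff hexp hp hhom hpk hk⟩
end

section
/- Newton's inequalities: let n ≥ 2 and let f(z) = Σ_{k=0}^n a_k z^k be a real polynomial of degree at most n all of whose complex roots are real. Then for every k with 1 ≤ k ≤ n − 1, (a_k / C(n,k))^2 ≥ (a_{k+1} / C(n,k+1)) · (a_{k−1} / C(n,k−1)), where C(n,k) denotes the binomial coefficient. If moreover all coefficients a_k are nonnegative, then every root of f is real and nonpositive. -/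
/-!
Real-rootedness of a real polynomial is preserved by differentiation (Rolle's theorem) and by
reversing its coefficients. Differentiating `f` `k - 1` times, reversing at degree `n - k + 1` and
differentiating `n - k - 1` more times yields a real-rooted quadratic whose coefficients are
`a_{k+1}, a_k, a_{k-1}` up to factorials; its nonnegative discriminant is Newton's inequality.
A nonzero polynomial with nonnegative coefficients is positive on `(0, ∞)`, so its real roots
are nonpositive.
-/

open Polynomial
open scoped Nat

theorem div_choose_eq_mul_factorial_div {K : Type*} [Field K] [CharZero K] (a : K) {n k : ℕ}
    (h : k ≤ n) :
    a / n.choose k = a * k ! * (n - k)! / n ! := by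
  rw [Nat.cast_choose K h, div_div_eq_mul_div, mul_assoc]

namespace Polynomial

section Field

variable {K : Type*} [Field K] {f : K[X]}

theorem Splits.reverse (hf : f.Splits) : f.reverse.Splits := by
  induction hf using Submonoid.closure_induction with
  | mem g hg =>
    obtain ⟨a, rfl⟩ | ⟨a, rfl⟩ := hg
    · simp
    · exact Splits.of_natDegree_le_one ((reverse_natDegree_le _).trans (natDegree_X_add_C a).le)
  | one => rw [← C_1, reverse_C]; exact Splits.C 1
  | mul g h _ _ hg hh => simpa using hg.mul hh

theorem Splits.reflect (hf : f.Splits) {N : ℕ} (hN : f.natDegree ≤ N) :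
    (f.reflect N).Splits := by
  have hrefl : f.reflect N = f.reverse * X ^ (N - f.natDegree) := by
    simpa [Polynomial.reverse, reflect_one, Nat.add_sub_cancel' hN] using
      reflect_mul f 1 le_rfl (natDegree_one.trans_le (Nat.zero_le (N - f.natDegree)))
  rw [hrefl]
  exact hf.reverse.mul (Splits.X_pow _)

end Field

theorem Splits.discrim_nonneg {K : Type*} [Field K] [LinearOrder K] [IsStrictOrderedRing K]
    {q : K[X]} (hq : q.Splits) (hdeg : q.natDegree ≤ 2) :
    0 ≤ discrim (q.coeff 2) (q.coeff 1) (q.coeff 0) := by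
  by_cases h2 : q.coeff 2 = 0
  · simpa [discrim, h2] using sq_nonneg (q.coeff 1)
  have hq0 : q ≠ 0 := by
    rintro rfl
    simp at h2
  have hdeg2 : q.degree = 2 := by
    rw [degree_eq_natDegree hq0, le_antisymm hdeg (le_natDegree_of_ne_zero h2)]
    rfl
  obtain ⟨x, hx⟩ := hq.exists_eval_eq_zero (by simp [hdeg2])
  have hroot : q.coeff 2 * (x * x) + q.coeff 1 * x + q.coeff 0 = 0 := by
    rw [eval_eq_sum_range' (n := 3) (by omega)] at hx
    simp only [Finset.sum_range_succ, Finset.sum_range_zero] at hx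
    linear_combination hx
  rw [discrim_eq_sq_of_quadratic_eq_zero hroot]
  exact sq_nonneg _

theorem Splits.derivative {f : ℝ[X]} (hf : f.Splits) : f.derivative.Splits := by
  rw [splits_iff_card_roots] at hf ⊢
  have := f.card_roots_le_derivative
  have := f.derivative.card_roots'
  rw [natDegree_derivative] at this ⊢
  omega

theorem Splits.iterate_derivative {f : ℝ[X]} (hf : f.Splits) (k : ℕ) :
    (Polynomial.derivative^[k] f).Splits := by
  induction k with
  | zero => exact hf
  | succ k ih => simpa only [Function.iterate_succ_apply'] using ih.derivative

theorem splits_of_forall_aeval_eq_zero_im_eq_zero {f : ℝ[X]}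
    (h : ∀ z : ℂ, aeval z f = 0 → z.im = 0) : f.Splits := by
  refine Splits.of_splits_map (algebraMap ℝ ℂ) (IsAlgClosed.splits _) fun z hz => ⟨z.re, ?_⟩
  have hz' : aeval z f = 0 := by simpa [eval_map_algebraMap] using (mem_roots'.1 hz).2
  exact Complex.ext (by simp) (by simp [h z hz'])

theorem coeff_iterate_derivative_reflect_iterate_derivative {R : Type*} [Semiring R]
    (f : R[X]) (m t : ℕ) {s j : ℕ} (hj : j ≤ s) :
    (derivative^[t] ((derivative^[m] f).reflect (t + s))).coeff j =
      ((j + t).descFactorial t * (s - j + m).descFactorial m) • f.coeff (s - j + m) := by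
  rw [coeff_iterate_derivative, coeff_reflect, revAt_le (by omega), coeff_iterate_derivative,
    mul_smul, show t + s - (j + t) = s - j by omega]

theorem Splits.newton_inequality_factorial {f : ℝ[X]} (hf : f.Splits) {m t : ℕ}
    (hdeg : f.natDegree ≤ m + t + 2) :
    (f.coeff (m + 2) * (m + 2)! * t !) * (f.coeff m * m ! * (t + 2)!) ≤
      (f.coeff (m + 1) * (m + 1)! * (t + 1)!) ^ 2 := by
  set q := Polynomial.derivative^[t] ((Polynomial.derivative^[m] f).reflect (t + 2)) with hq_def
  have hgdeg : (Polynomial.derivative^[m] f).natDegree ≤ t + 2 :=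
    (natDegree_iterate_derivative f m).trans (by omega)
  have hq : q.Splits := ((hf.iterate_derivative m).reflect hgdeg).iterate_derivative t
  have hqdeg : q.natDegree ≤ 2 := by
    refine (natDegree_iterate_derivative _ t).trans ?_
    have := natDegree_reflect_le (N := t + 2) (p := Polynomial.derivative^[m] f)
    omega
  have hcoeff (j : ℕ) (hj : j ≤ 2) :
      q.coeff j * (j ! * (2 - j)!) = f.coeff (2 - j + m) * (2 - j + m)! * (j + t)! := by
    have h₁ := Nat.factorial_mul_descFactorial (Nat.le_add_left t j)
    have h₂ := Nat.factorial_mul_descFactorial (Nat.le_add_left m (2 - j))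
    rw [Nat.add_sub_cancel] at h₁ h₂
    rw [hq_def, coeff_iterate_derivative_reflect_iterate_derivative f m t hj, nsmul_eq_mul,
      ← h₁, ← h₂]
    push_cast
    ring
  have h₀ := hcoeff 0 (by norm_num)
  have h₁ := hcoeff 1 (by norm_num)
  have h₂ := hcoeff 2 le_rfl
  norm_num [add_comm _ m, add_comm _ t] at h₀ h₁ h₂
  have := hq.discrim_nonneg hqdeg
  rw [discrim] at this
  rw [← h₀, ← h₁, ← h₂]
  linarith

theorem Splits.newton_inequality {f : ℝ[X]} (hf : f.Splits) {n k : ℕ} (hdeg : f.natDegree ≤ n)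
    (hk : 1 ≤ k) (hkn : k ≤ n - 1) :
    (f.coeff (k + 1) / n.choose (k + 1)) * (f.coeff (k - 1) / n.choose (k - 1)) ≤
      (f.coeff k / n.choose k) ^ 2 := by
  obtain ⟨m, rfl⟩ : ∃ m, k = m + 1 := ⟨k - 1, by omega⟩
  obtain ⟨t, rfl⟩ : ∃ t, n = m + t + 2 := ⟨n - m - 2, by omega⟩
  rw [div_choose_eq_mul_factorial_div _ (by omega), div_choose_eq_mul_factorial_div _ (by omega),
    div_choose_eq_mul_factorial_div _ (by omega), div_mul_div_comm, div_pow, ← sq,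
    Nat.add_sub_cancel, show m + t + 2 - (m + 1 + 1) = t by omega,
    show m + t + 2 - m = t + 2 by omega, show m + t + 2 - (m + 1) = t + 1 by omega]
  gcongr
  simpa only [mul_assoc] using hf.newton_inequality_factorial hdeg

theorem eval_pos_of_coeff_nonneg {R : Type*} [Semiring R] [PartialOrder R]
    [IsStrictOrderedRing R] {f : R[X]} (hf : f ≠ 0) (hcoeff : ∀ k, 0 ≤ f.coeff k) {x : R}
    (hx : 0 < x) :
    0 < f.eval x := by
  rw [eval_eq_sum_range]
  refine Finset.sum_pos' (fun i _ => mul_nonneg (hcoeff i) (pow_nonneg hx.le i))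
    ⟨f.natDegree, Finset.self_mem_range_succ _, mul_pos ?_ (pow_pos hx _)⟩
  exact (hcoeff _).lt_of_ne' (leadingCoeff_ne_zero.2 hf)

end Polynomial

theorem stmt5_general (n : ℕ) (f : Polynomial ℝ) (hdeg : f.natDegree ≤ n)
    (hroots : ∀ z : ℂ, Polynomial.aeval z f = 0 → z.im = 0) :
    (∀ k, 1 ≤ k → k ≤ n - 1 →
      (f.coeff (k + 1) / (n.choose (k + 1) : ℝ)) *
          (f.coeff (k - 1) / (n.choose (k - 1) : ℝ)) ≤
        (f.coeff k / (n.choose k : ℝ)) ^ 2) ∧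
    ((∀ k, 0 ≤ f.coeff k) →
      ∀ z : ℂ, Polynomial.aeval z f = 0 → ∃ r : ℝ, r ≤ 0 ∧ z = (r : ℂ)) := by
  refine ⟨fun k hk hkn => (splits_of_forall_aeval_eq_zero_im_eq_zero hroots).newton_inequality
    hdeg hk hkn, fun hcoeff z hz => ?_⟩
  have hz_real : z = (z.re : ℂ) := Complex.ext rfl (by simp [hroots z hz])
  have hf : f ≠ 0 := by
    rintro rfl
    simpa using hroots Complex.I (by simp)
  have hre : f.eval z.re = 0 :=
    Complex.ofReal_eq_zero.1 ((ofReal_eval f z.re).trans (hz_real ▸ hz))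
  exact ⟨z.re, not_lt.1 fun hpos => (eval_pos_of_coeff_nonneg hf hcoeff hpos).ne' hre, hz_real⟩

/-- **Newton's inequalities.**
Let `n ≥ 2` and let `f(z) = ∑_{k=0}^n a_k z^k` be a real polynomial of degree at most
`n` all of whose complex roots are real.  Then for `1 ≤ k ≤ n - 1`,
`(a_k / C(n,k))² ≥ (a_{k+1} / C(n,k+1)) · (a_{k-1} / C(n,k-1))`.  If moreover all
coefficients are nonnegative, then every complex root of `f` is real and nonpositive. -/
theorem stmt5 (n : ℕ) (hn : 2 ≤ n) (f : Polynomial ℝ) (hdeg : f.natDegree ≤ n)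
    (hroots : ∀ z : ℂ, Polynomial.aeval z f = 0 → z.im = 0) :
    (∀ k, 1 ≤ k → k ≤ n - 1 →
      (f.coeff (k + 1) / (n.choose (k + 1) : ℝ)) *
          (f.coeff (k - 1) / (n.choose (k - 1) : ℝ)) ≤
        (f.coeff k / (n.choose k : ℝ)) ^ 2) ∧
    ((∀ k, 0 ≤ f.coeff k) →
      ∀ z : ℂ, Polynomial.aeval z f = 0 → ∃ r : ℝ, r ≤ 0 ∧ z = (r : ℂ)) :=
  stmt5_general n f hdeg hroots
end

section
/- Fix n ≥ 1 and nonnegative real weights W(e) for each unordered pair e = {i,j} of distinct elements of {1,…,n} (the edges of the complete graph K_n). For 0 ≤ j ≤ ⌊n/2⌋ let a_j := Σ_M Π_{e ∈ M} W(e), where the sum is over all matchings M of size j, i.e., sets of j pairwise disjoint edges (so a_0 = 1). Then every complex root of the polynomial Σ_{j=0}^{⌊n/2⌋} a_j z^j is real (and nonpositive). -/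
/-!
Write `P_S(z) = ∑_M (∏_{e ∈ M} W e) z^|M|` over the matchings `M` of a vertex set `S`. Splitting
according to the edge at a vertex `v` gives `P_S = P_{S-v} + z ∑_u W{v,u} P_{S-v-u}`. For
`Im z > 0`, induction on `S` shows that every ratio `P_S / P_{S-v}` lies in the sector
`0 ≤ arg < arg z`: if each `P_{S-v} / P_{S-v-u}` does, then each `z P_{S-v-u} / P_{S-v}` has
argument in `(0, arg z]`, and `1` plus a nonnegative combination of these stays in the sector.
Hence `P_S(z) ≠ 0`, also for `Im z < 0` by conjugation, while for real `z > 0` every term is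
nonnegative and the empty matching contributes `1`.
-/

open Finset

section Matchings

variable {α : Type*}

open scoped Classical in
noncomputable def matchings (S : Finset α) : Finset (Finset (Finset α)) :=
  S.powerset.powerset.filter fun M =>
    (∀ e ∈ M, e.card = 2) ∧ (M : Set (Finset α)).PairwiseDisjoint id

variable {S T e : Finset α} {M : Finset (Finset α)}

theorem mem_matchings :
    M ∈ matchings S ↔
      (∀ e ∈ M, e ⊆ S ∧ e.card = 2) ∧ (M : Set (Finset α)).PairwiseDisjoint id := by
  simp only [matchings, mem_filter, mem_powerset, subset_iff, forall_and]
  tauto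

theorem matchings_empty : matchings (∅ : Finset α) = {∅} := by
  ext M
  rw [mem_matchings, mem_singleton, eq_empty_iff_forall_notMem]
  refine ⟨fun h e he => ?_, fun h => ⟨fun e he => (h e he).elim, fun e he => (h e he).elim⟩⟩
  obtain ⟨hsub, hcard⟩ := h.1 e he
  simp [subset_empty.mp hsub] at hcard

theorem notMem_of_mem_matchings {a : α} (hM : M ∈ matchings T) (ha : a ∈ e) (haT : a ∉ T) :
    e ∉ M :=
  fun he => haT ((mem_matchings.mp hM).1 e he |>.1 ha)

variable {R : Type*} [CommSemiring R]

noncomputable def matchingPoly (W : Finset α → R) (S : Finset α) (z : R) : R :=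
  ∑ M ∈ matchings S, (∏ e ∈ M, W e) * z ^ M.card

variable [DecidableEq α]

theorem two_mul_card_le_of_mem_matchings (hM : M ∈ matchings S) : 2 * M.card ≤ S.card := by
  rw [mem_matchings] at hM
  calc 2 * M.card = ∑ e ∈ M, e.card := by
        rw [sum_congr rfl fun e he => (hM.1 e he).2, sum_const, smul_eq_mul, mul_comm]
    _ = (M.biUnion id).card := (card_biUnion hM.2).symm
    _ ≤ S.card := card_le_card (biUnion_subset.mpr fun e he => (hM.1 e he).1)

theorem insert_mem_matchings (hM : M ∈ matchings T) (he : e.card = 2) (heS : e ⊆ S)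
    (hTS : T ⊆ S) (hdisj : Disjoint e T) : insert e M ∈ matchings S := by
  obtain ⟨hedges, hdisjM⟩ := mem_matchings.mp hM
  refine mem_matchings.mpr ⟨?_, ?_⟩
  · simp only [mem_insert, forall_eq_or_imp]
    exact ⟨⟨heS, he⟩, fun f hf => ⟨(hedges f hf).1.trans hTS, (hedges f hf).2⟩⟩
  · rw [coe_insert, Set.pairwiseDisjoint_insert]
    exact ⟨hdisjM, fun f hf _ => hdisj.mono_right (hedges f hf).1⟩

theorem erase_mem_matchings (hM : M ∈ matchings S) (he : e ∈ M) :
    M.erase e ∈ matchings (S \ e) := by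
  obtain ⟨hedges, hdisjM⟩ := mem_matchings.mp hM
  refine mem_matchings.mpr ⟨fun f hf => ?_, hdisjM.subset (by simp)⟩
  obtain ⟨hfe, hfM⟩ := mem_erase.mp hf
  exact ⟨subset_sdiff.mpr ⟨(hedges f hfM).1, (hdisjM hfM he hfe)⟩, (hedges f hfM).2⟩

end Matchings

section Recurrence

variable {α : Type*} [DecidableEq α] {S : Finset α} {v : α}

theorem filter_matchings_forall_notMem :
    (matchings S).filter (fun M => ∀ e ∈ M, v ∉ e) = matchings (S.erase v) := by
  ext M
  simp only [mem_filter, mem_matchings, subset_erase]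
  constructor
  · rintro ⟨⟨hedges, hdisj⟩, hv⟩
    exact ⟨fun e he => ⟨⟨(hedges e he).1, hv e he⟩, (hedges e he).2⟩, hdisj⟩
  · rintro ⟨hedges, hdisj⟩
    exact ⟨⟨fun e he => ⟨(hedges e he).1.1, (hedges e he).2⟩, hdisj⟩,
      fun e he => (hedges e he).1.2⟩

theorem exists_eq_pair_of_card_eq_two {e : Finset α} (he : e.card = 2) (hv : v ∈ e) :
    ∃ u, u ≠ v ∧ e = {v, u} := by
  obtain ⟨u, hu⟩ := card_eq_one.mp (by rw [card_erase_of_mem hv, he] : (e.erase v).card = 1)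
  refine ⟨u, (mem_erase.mp (hu ▸ mem_singleton_self u)).1, ?_⟩
  rw [← insert_erase hv, hu]

theorem erase_erase_eq_sdiff_pair (u : α) : (S.erase v).erase u = S \ {v, u} := by
  ext x
  simp only [mem_erase, mem_sdiff, mem_insert, mem_singleton]
  tauto

theorem image_sigma_insert_pair (hv : v ∈ S) :
    ((S.erase v).sigma fun u => matchings ((S.erase v).erase u)).image
        (fun x => insert {v, x.1} x.2) =
      (matchings S).filter (fun M => ¬ ∀ e ∈ M, v ∉ e) := by
  ext M
  simp only [mem_image, mem_sigma, mem_filter, Sigma.exists, not_forall, not_not]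
  constructor
  · rintro ⟨u, M', ⟨hu, hM'⟩, rfl⟩
    obtain ⟨huv, huS⟩ := mem_erase.mp hu
    refine ⟨insert_mem_matchings hM' (card_pair huv.symm) ?_ ?_ ?_, {v, u}, mem_insert_self _ _,
      mem_insert_self _ _⟩
    · exact insert_subset hv (singleton_subset_iff.mpr huS)
    · exact (erase_subset _ _).trans (erase_subset _ _)
    · rw [erase_erase_eq_sdiff_pair]
      exact disjoint_sdiff
  · rintro ⟨hM, e, he, hve⟩
    obtain ⟨hS, hcard⟩ := (mem_matchings.mp hM).1 e he
    obtain ⟨u, huv, rfl⟩ := exists_eq_pair_of_card_eq_two hcard hve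
    refine ⟨u, M.erase {v, u}, ⟨mem_erase.mpr ⟨huv, hS (by simp)⟩, ?_⟩, insert_erase he⟩
    rw [erase_erase_eq_sdiff_pair]
    exact erase_mem_matchings hM he

theorem injOn_sigma_insert_pair :
    Set.InjOn (fun x : (_ : α) × Finset (Finset α) => insert {v, x.1} x.2)
      ((S.erase v).sigma fun u => matchings ((S.erase v).erase u)) := by
  rintro ⟨u₁, M₁⟩ h₁ ⟨u₂, M₂⟩ h₂ heq
  simp only [coe_sigma, Set.mem_sigma_iff, mem_coe] at h₁ h₂ heq
  have hv₁ : {v, u₁} ∉ M₁ := notMem_of_mem_matchings h₁.2 (mem_insert_self v _) (by simp)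
  have hv₂ : {v, u₂} ∉ M₂ := notMem_of_mem_matchings h₂.2 (mem_insert_self v _) (by simp)
  have hpair : ({v, u₁} : Finset α) = {v, u₂} := by
    have h := heq ▸ mem_insert_self {v, u₁} M₁
    refine (mem_insert.mp h).resolve_right fun hmem => ?_
    exact notMem_of_mem_matchings h₂.2 (mem_insert_self v _) (by simp) hmem
  have hu : u₁ = u₂ := by
    have : u₁ ∈ ({v, u₂} : Finset α) := hpair ▸ mem_insert_of_mem (mem_singleton_self u₁)
    exact mem_singleton.mp ((mem_insert.mp this).resolve_left (mem_erase.mp h₁.1).1)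
  subst hu
  have hM : M₁ = M₂ := by
    rw [← erase_insert hv₁, ← erase_insert hv₂, heq]
  rw [hM]

variable {R : Type*} [CommSemiring R]

theorem matchingPoly_eq_erase_add_sum (W : Finset α → R) (hv : v ∈ S) (z : R) :
    matchingPoly W S z = matchingPoly W (S.erase v) z +
      z * ∑ u ∈ S.erase v, W {v, u} * matchingPoly W ((S.erase v).erase u) z := by
  rw [matchingPoly, ← sum_filter_add_sum_filter_not (matchings S) (fun M => ∀ e ∈ M, v ∉ e),
    filter_matchings_forall_notMem, ← image_sigma_insert_pair hv,
    sum_image injOn_sigma_insert_pair, sum_sigma, mul_sum]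
  congr 1
  refine sum_congr rfl fun u _ => ?_
  rw [matchingPoly, mul_sum, mul_sum]
  refine sum_congr rfl fun M hM => ?_
  have hvu : {v, u} ∉ M := notMem_of_mem_matchings hM (mem_insert_self v _) (by simp)
  rw [prod_insert hvu, card_insert_of_notMem hvu]
  ring

end Recurrence

section Evaluation

variable {α : Type*}

theorem matchingPoly_empty {R : Type*} [CommSemiring R] (W : Finset α → R) (z : R) :
    matchingPoly W ∅ z = 1 := by
  simp [matchingPoly, matchings_empty]

theorem RingHom.map_matchingPoly {R R' : Type*} [CommSemiring R] [CommSemiring R']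
    (f : R →+* R') (W : Finset α → R) (S : Finset α) (z : R) :
    f (matchingPoly W S z) = matchingPoly (f ∘ W) S (f z) := by
  simp [matchingPoly, map_sum, map_prod]

theorem one_le_matchingPoly {R : Type*} [CommSemiring R] [PartialOrder R] [IsOrderedRing R]
    {W : Finset α → R} (hW : ∀ e, 0 ≤ W e) (S : Finset α) {x : R} (hx : 0 ≤ x) :
    1 ≤ matchingPoly W S x := by
  have hempty : (∅ : Finset (Finset α)) ∈ matchings S := by
    simp [mem_matchings]
  calc (1 : R) = (∏ e ∈ (∅ : Finset (Finset α)), W e) * x ^ (∅ : Finset (Finset α)).card := by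
        simp
    _ ≤ ∑ M ∈ matchings S, (∏ e ∈ M, W e) * x ^ M.card :=
        single_le_sum (f := fun M => (∏ e ∈ M, W e) * x ^ M.card)
          (fun M _ => mul_nonneg (prod_nonneg fun e _ => hW e) (pow_nonneg hx _)) hempty

theorem sum_range_card_div_two_eq_matchingPoly {R : Type*} [CommSemiring R] [Fintype α]
    [DecidableEq α] (W : Finset α → R) (z : R) :
    ∑ j ∈ range (Fintype.card α / 2 + 1),
        (∑ M ∈ univ.filter (fun M : Finset (Finset α) => M.card = j ∧ (∀ e ∈ M, e.card = 2) ∧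
          (∀ e ∈ M, ∀ e' ∈ M, e ≠ e' → Disjoint e e')), ∏ e ∈ M, W e) * z ^ j =
      matchingPoly W univ z := by
  have hcard : ∀ M ∈ matchings (univ : Finset α), M.card ∈ range (Fintype.card α / 2 + 1) := by
    intro M hM
    have := two_mul_card_le_of_mem_matchings hM
    rw [card_univ] at this
    rw [mem_range]
    omega
  rw [matchingPoly, ← sum_fiberwise_of_maps_to hcard]
  refine sum_congr rfl fun j _ => ?_
  rw [sum_mul]
  refine sum_congr ?_ fun M hM => by rw [(mem_filter.mp hM).2]
  ext M
  simp only [mem_filter, mem_univ, true_and, mem_matchings, subset_univ]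
  exact and_comm

end Evaluation

section Sector

/-- For `0 < z.im`, the nonzero `w` with `0 ≤ arg w < arg z`. -/
def sector (z : ℂ) : Set ℂ := {w | 0 ≤ w.im ∧ w.im * z.re < w.re * z.im}

/-- For `0 < z.im`, `0` and the `w` with `0 ≤ arg w ≤ arg z`. -/
def closedSector (z : ℂ) : Set ℂ := {w | 0 ≤ w.im ∧ w.im * z.re ≤ w.re * z.im}

variable {z w : ℂ}

theorem ne_zero_of_mem_sector (hw : w ∈ sector z) : w ≠ 0 := by
  rintro rfl
  simp [sector] at hw

theorem div_mem_closedSector (hw : w ∈ sector z) : z / w ∈ closedSector z := by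
  have hN : 0 < Complex.normSq w := Complex.normSq_pos.mpr (ne_zero_of_mem_sector hw)
  obtain ⟨him, hlt⟩ := hw
  simp only [closedSector, Set.mem_ofPred_eq, Complex.div_re, Complex.div_im]
  constructor
  · rw [← sub_div]
    exact div_nonneg (by linarith) hN.le
  · rw [← add_div, ← sub_div, div_mul_eq_mul_div, div_mul_eq_mul_div]
    exact div_le_div_of_nonneg_right (by nlinarith [sq_nonneg z.re, sq_nonneg z.im]) hN.le

theorem one_add_sum_mem_sector {ι : Type*} (hz : 0 < z.im) {s : Finset ι} {c : ι → ℝ}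
    (hc : ∀ i ∈ s, 0 ≤ c i) {x : ι → ℂ} (hx : ∀ i ∈ s, x i ∈ closedSector z) :
    1 + ∑ i ∈ s, (c i : ℂ) * x i ∈ sector z := by
  simp only [sector, Set.mem_ofPred_eq, Complex.add_re, Complex.add_im, Complex.one_re,
    Complex.one_im, Complex.re_sum, Complex.im_sum, Complex.re_ofReal_mul, Complex.im_ofReal_mul,
    zero_add, add_mul, one_mul, sum_mul]
  constructor
  · exact sum_nonneg fun i hi => mul_nonneg (hc i hi) (hx i hi).1
  · have : ∑ i ∈ s, c i * (x i).im * z.re ≤ ∑ i ∈ s, c i * (x i).re * z.im :=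
      sum_le_sum fun i hi => by
        rw [mul_assoc, mul_assoc]
        exact mul_le_mul_of_nonneg_left (hx i hi).2 (hc i hi)
    linarith

end Sector

section HeilmannLieb

variable {α : Type*} [DecidableEq α] {W : Finset α → ℝ} {z : ℂ}

local notation "P" => matchingPoly (fun e => (W e : ℂ))

theorem matchingPoly_div_erase_mem_sector (hW : ∀ e, 0 ≤ W e) (hz : 0 < z.im) {S : Finset α}
    {v : α} (hv : v ∈ S) (hne : P (S.erase v) z ≠ 0)
    (hIH : ∀ u ∈ S.erase v, P ((S.erase v).erase u) z ≠ 0 ∧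
      P (S.erase v) z / P ((S.erase v).erase u) z ∈ sector z) :
    P S z / P (S.erase v) z ∈ sector z := by
  have hratio : P S z / P (S.erase v) z = 1 + ∑ u ∈ S.erase v,
      (W {v, u} : ℂ) * (z / (P (S.erase v) z / P ((S.erase v).erase u) z)) := by
    rw [matchingPoly_eq_erase_add_sum _ hv, add_div, div_self hne, mul_sum, sum_div]
    refine congrArg _ (sum_congr rfl fun u hu => ?_)
    have := (hIH u hu).1
    field_simp
  rw [hratio]
  exact one_add_sum_mem_sector hz (fun u _ => hW _)
    fun u hu => div_mem_closedSector (hIH u hu).2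

theorem matchingPoly_ne_zero_and_div_erase_mem_sector (hW : ∀ e, 0 ≤ W e) (hz : 0 < z.im)
    (S : Finset α) : P S z ≠ 0 ∧ ∀ v ∈ S, P S z / P (S.erase v) z ∈ sector z := by
  induction S using Finset.strongInduction with
  | _ S IH =>
    have hsector : ∀ v ∈ S, P S z / P (S.erase v) z ∈ sector z := fun v hv =>
      matchingPoly_div_erase_mem_sector hW hz hv (IH _ (erase_ssubset hv)).1 fun u hu =>
        ⟨(IH _ ((erase_ssubset hu).trans (erase_ssubset hv))).1, (IH _ (erase_ssubset hv)).2 u hu⟩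
    refine ⟨?_, hsector⟩
    obtain rfl | ⟨v, hv⟩ := S.eq_empty_or_nonempty
    · rw [matchingPoly_empty]
      exact one_ne_zero
    · exact (div_ne_zero_iff.mp (ne_zero_of_mem_sector (hsector v hv))).1

theorem matchingPoly_ne_zero_of_im_ne_zero (hW : ∀ e, 0 ≤ W e) (hz : z.im ≠ 0)
    (S : Finset α) : P S z ≠ 0 := by
  obtain hneg | hpos := hz.lt_or_gt
  · have hconj : starRingEnd ℂ (P S z) = P S (starRingEnd ℂ z) := by
      simp [RingHom.map_matchingPoly, Function.comp_def, Complex.conj_ofReal]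
    have := (matchingPoly_ne_zero_and_div_erase_mem_sector hW
      (by rwa [Complex.conj_im, neg_pos]) S).1
    rwa [← hconj, map_ne_zero] at this
  · exact (matchingPoly_ne_zero_and_div_erase_mem_sector hW hpos S).1

end HeilmannLieb

theorem stmt7_general (n : ℕ) (W : Finset (Fin n) → ℝ) (hW : ∀ e, 0 ≤ W e)
    (a : ℕ → ℝ)
    (ha : ∀ j, a j = ∑ M ∈ Finset.univ.filter
        (fun M : Finset (Finset (Fin n)) =>
          M.card = j ∧ (∀ e ∈ M, e.card = 2) ∧
            (∀ e ∈ M, ∀ e' ∈ M, e ≠ e' → Disjoint e e')),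
        ∏ e ∈ M, W e)
    (z : ℂ) (hz : (∑ j ∈ Finset.range (n / 2 + 1), (a j : ℂ) * z ^ j) = 0) :
    ∃ r : ℝ, r ≤ 0 ∧ z = (r : ℂ) := by
  have hroot : matchingPoly (fun e => (W e : ℂ)) univ z = 0 := by
    rw [← sum_range_card_div_two_eq_matchingPoly, Fintype.card_fin, ← hz]
    simp only [ha]
    push_cast
    rfl
  have him : z.im = 0 := by
    by_contra h
    exact matchingPoly_ne_zero_of_im_ne_zero hW h univ hroot
  have hreal : z = (z.re : ℂ) := Complex.ext rfl (by simp [him])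
  refine ⟨z.re, not_lt.mp fun hpos => ?_, hreal⟩
  have hcast :
      ((matchingPoly W univ z.re : ℝ) : ℂ) = matchingPoly (fun e => (W e : ℂ)) univ z := by
    rw [← Complex.ofRealHom_eq_coe, RingHom.map_matchingPoly]
    conv_rhs => rw [hreal]
    rfl
  rw [← hcast, Complex.ofReal_eq_zero] at hroot
  linarith [one_le_matchingPoly hW univ hpos.le]

/-- **Theorem (Heilmann–Lieb: real-rootedness of the matching polynomial).**
Fix `n ≥ 1` and nonnegative weights `W(e)` on the 2-element subsets (edges) of
`{1,…,n}`.  For `0 ≤ j ≤ ⌊n/2⌋` let `a_j` be the total weight of all matchings with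
exactly `j` edges (sets of `j` pairwise disjoint edges), the weight of a matching being
the product of its edge weights.  Then every complex root of `∑_j a_j z^j` is real and
nonpositive. -/
theorem stmt7 (n : ℕ) (hn : 1 ≤ n) (W : Finset (Fin n) → ℝ) (hW : ∀ e, 0 ≤ W e)
    (a : ℕ → ℝ)
    (ha : ∀ j, a j = ∑ M ∈ Finset.univ.filter
        (fun M : Finset (Finset (Fin n)) =>
          M.card = j ∧ (∀ e ∈ M, e.card = 2) ∧
            (∀ e ∈ M, ∀ e' ∈ M, e ≠ e' → Disjoint e e')),
        ∏ e ∈ M, W e)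
    (z : ℂ) (hz : (∑ j ∈ Finset.range (n / 2 + 1), (a j : ℂ) * z ^ j) = 0) :
    ∃ r : ℝ, r ≤ 0 ∧ z = (r : ℂ) :=
  stmt7_general n W hW a ha z hz
end

section
/- Let f be a real polynomial in d variables that is not identically zero. Then f is stable if and only if for every v ∈ ℝ^d, every u ∈ ℝ^d with all coordinates strictly positive, and every t ∈ ℂ with Im(t) ≠ 0, one has f(v + t u) ≠ 0 (equivalently: the univariate polynomial t ↦ f(v + t u) has only real zeros). -/
lemma conj_aeval (d : ℕ) (f : MvPolynomial (Fin d) ℝ) (z : Fin d → ℂ) :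
    (starRingEnd ℂ) (MvPolynomial.aeval z f)
      = MvPolynomial.aeval (fun j => (starRingEnd ℂ) (z j)) f := by
  rw [MvPolynomial.aeval_def, MvPolynomial.aeval_def, MvPolynomial.eval₂_comp_left (starRingEnd ℂ)]
  congr 1
  ext r
  simp [Complex.conj_ofReal]

/-- **Proposition (real stability via real lines in positive directions).**
A nonzero real polynomial `f` in `d` variables is stable if and only if for every
`v ∈ ℝ^d`, every `u` in the open positive orthant, and every non-real `t ∈ ℂ`,
`f(v + t u) ≠ 0` (i.e. the univariate polynomial `t ↦ f(v + t u)` has only real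
zeros). -/
theorem stmt10 (d : ℕ) (f : MvPolynomial (Fin d) ℝ) (hf : f ≠ 0) :
    (∀ z : Fin d → ℂ, (∀ j, 0 < (z j).im) → MvPolynomial.aeval z f ≠ 0) ↔
      (∀ (v u : Fin d → ℝ), (∀ j, 0 < u j) → ∀ t : ℂ, t.im ≠ 0 →
        MvPolynomial.aeval (fun j => (v j : ℂ) + t * (u j : ℂ)) f ≠ 0) := by
  constructor
  · intro h v u hu t ht
    rcases ht.lt_or_gt with hlt | hgt
    · -- Im t < 0 : use conjugation
      intro h0
      apply h (fun j => (v j : ℂ) + (starRingEnd ℂ t) * (u j : ℂ))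
      · intro j
        simp only [Complex.add_im, Complex.ofReal_im, Complex.mul_im,
          Complex.conj_im, Complex.conj_re, Complex.ofReal_re, zero_add,
          mul_zero, add_zero]
        exact mul_pos (neg_pos.mpr hlt) (hu j)
      · rw [show (fun j => (v j : ℂ) + (starRingEnd ℂ t) * (u j : ℂ))
            = fun j => (starRingEnd ℂ) ((v j : ℂ) + t * (u j : ℂ)) by
          funext j; simp [Complex.conj_ofReal]]
        rw [← conj_aeval, h0, map_zero]
    · exact h _ (fun j => by
        simp only [Complex.add_im, Complex.ofReal_im, Complex.mul_im,
          Complex.ofReal_re, zero_add, mul_zero, add_zero]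
        exact mul_pos hgt (hu j))
  · intro h z hz
    have := h (fun j => (z j).re) (fun j => (z j).im) hz Complex.I (by simp)
    have hzeq : z = fun j => ((z j).re : ℂ) + Complex.I * ((z j).im : ℂ) := by
      funext j
      simp [Complex.ext_iff]
    rw [hzeq]
    exact this
end

section
/- Let f be a stable polynomial with complex coefficients in variables z_1,…,z_d, and let f_ma denote its multi-affine part, i.e., the sum of those terms of f whose monomials are square-free (every variable appearing with exponent at most 1). Then f_ma is stable or identically zero. -/
/-!
Write `F = ∑ₖ Gₖ X_jᵏ` with `Gₖ` free of `X_j`, and let `k₀` be the least `k` with `Gₖ ≠ 0`.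
For `z` in the open upper half-plane `Hᵈ`, the univariate polynomial `w ↦ F(z[j := w])` has all
its roots in the closed lower half-plane. This gives `‖G_{k₀}(z)‖ tᵏ⁰ ≤ ‖F(z[j := it])‖` for
`t > 0`, while `F(z[j := it]) / (it)ᵏ⁰ → G_{k₀}(z)` as `t → 0⁺`. On a complex line through a zero
of `G_{k₀}` in `Hᵈ`, Schwarz's lemma applied to the quotient of these two functions forces
`G_{k₀}` to vanish near that zero (a Hurwitz-type argument), hence everywhere. So `G_{k₀}` has no
zeros in `Hᵈ`, and the truncation `G₀ + G₁ X_j` is either `0` (`k₀ ≥ 2`), or `G₁ X_j` (`k₀ = 1`),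
or, when `k₀ = 0`, nonvanishing because `G₁ / G₀ = ∑ 1 / (-r)` over the roots `r` of the
univariate restriction has nonpositive imaginary part. Truncating one variable at a time yields
the multi-affine part.
-/

open Complex Filter Topology Metric Set

namespace Polynomial

def IsStable (p : ℂ[X]) : Prop := ∀ w : ℂ, 0 < w.im → p.eval w ≠ 0

namespace IsStable

variable {p : ℂ[X]}

lemma im_nonpos_of_mem_roots (hp : p.IsStable) {r : ℂ} (hr : r ∈ p.roots) : r.im ≤ 0 :=
  not_lt.1 fun h => hp r h (isRoot_of_mem_roots hr)

lemma of_X_pow_mul {k : ℕ} {q : ℂ[X]} (hp : (X ^ k * q).IsStable) : q.IsStable :=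
  fun w hw h => hp w hw (by simp [h])

-- Every root factor `‖x - r‖` grows as `x` moves up the imaginary axis from `0`.
lemma norm_eval_zero_le (hp : p.IsStable) {t : ℝ} (ht : 0 ≤ t) :
    ‖p.eval 0‖ ≤ ‖p.eval (I * t)‖ := by
  have hs := IsAlgClosed.splits p
  have hnorm (x : ℂ) : ‖(p.roots.map (x - ·)).prod‖ = (p.roots.map fun r => ‖x - r‖).prod := by
    simpa [Multiset.map_map] using map_multiset_prod (normHom : ℂ →*₀ ℝ) (p.roots.map (x - ·))
  rw [hs.eval_eq_prod_roots, hs.eval_eq_prod_roots, norm_mul, norm_mul, hnorm, hnorm]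
  refine mul_le_mul_of_nonneg_left (Multiset.prod_map_le_prod_map₀ _ _
    (fun _ _ => norm_nonneg _) fun r hr => ?_) (norm_nonneg _)
  have hr := hp.im_nonpos_of_mem_roots hr
  simp only [zero_sub, norm_neg, Complex.norm_def]
  gcongr
  simp only [normSq_apply, sub_re, mul_re, I_re, ofReal_re, I_im, ofReal_im, sub_im, mul_im]
  nlinarith

lemma norm_coeff_mul_pow_le (hp : p.IsStable) {k : ℕ} (hk : X ^ k ∣ p) {t : ℝ} (ht : 0 ≤ t) :
    ‖p.coeff k‖ * t ^ k ≤ ‖p.eval (I * t)‖ := by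
  obtain ⟨q, rfl⟩ := hk
  have := hp.of_X_pow_mul.norm_eval_zero_le ht
  simp only [coeff_X_pow_mul', le_refl, ↓reduceIte, Nat.sub_self, eval_mul, eval_pow, eval_X,
    norm_mul, norm_pow, norm_I, Complex.norm_real, Real.norm_eq_abs, abs_of_nonneg ht, one_mul,
    coeff_zero_eq_eval_zero]
  rw [mul_comm]
  gcongr

lemma coeff_zero_add_coeff_one_mul_ne_zero (hp : p.IsStable) (h0 : p.coeff 0 ≠ 0) {w : ℂ}
    (hw : 0 < w.im) : p.coeff 0 + p.coeff 1 * w ≠ 0 := by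
  -- `p.coeff 1 / p.coeff 0 = p'(0) / p(0) = ∑ᵣ 1 / (0 - r)`, a sum of terms with `im ≤ 0`.
  have hratio : (p.coeff 1 / p.coeff 0).im ≤ 0 := by
    rw [coeff_zero_eq_eval_zero] at h0 ⊢
    rw [← taylor_zero p, taylor_coeff_one, taylor_zero,
      (IsAlgClosed.splits p).eval_derivative_div_eval_of_ne_zero h0, ← coe_imAddGroupHom,
      map_multiset_sum, Multiset.map_map]
    refine (Multiset.sum_le_card_nsmul _ 0 fun x hx => ?_).trans (by simp)
    obtain ⟨r, hr, rfl⟩ := Multiset.mem_map.1 hx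
    simp only [Function.comp_apply, coe_imAddGroupHom, zero_sub, one_div, inv_im, neg_im,
      neg_neg]
    exact div_nonpos_of_nonpos_of_nonneg (hp.im_nonpos_of_mem_roots hr) (normSq_nonneg _)
  set a := p.coeff 1 / p.coeff 0
  intro h
  have ha : 1 + a * w = 0 := by
    rw [← mul_right_inj' h0, mul_zero, ← h, mul_add, mul_one, ← mul_assoc, mul_div_cancel₀ _ h0]
  have ha0 : a ≠ 0 := by rintro h; simp [h] at ha
  have hw' : w = -a⁻¹ := by field_simp; linear_combination ha
  have : 0 < (-a⁻¹).im := hw' ▸ hw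
  simp only [neg_im, inv_im, neg_div, neg_neg] at this
  exact (div_pos_iff_of_pos_right (normSq_pos.2 ha0)).1 this |>.not_ge hratio

end IsStable

lemma tendsto_eval_I_mul_div_pow {p : ℂ[X]} {k : ℕ} (hk : X ^ k ∣ p) :
    Tendsto (fun t : ℝ => p.eval (I * t) / (I * t) ^ k) (𝓝[>] 0) (𝓝 (p.coeff k)) := by
  obtain ⟨q, rfl⟩ := hk
  have hq : Tendsto (fun t : ℝ => q.eval (I * t)) (𝓝[>] 0) (𝓝 (q.eval 0)) := by
    have : Continuous fun t : ℝ => q.eval (I * t) := by fun_prop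
    simpa using this.tendsto 0 |>.mono_left nhdsWithin_le_nhds
  rw [coeff_X_pow_mul', if_pos le_rfl, Nat.sub_self, coeff_zero_eq_eval_zero]
  refine hq.congr' (eventually_mem_nhdsWithin.mono fun t ht => ?_)
  have : I * t ≠ 0 := mul_ne_zero I_ne_zero (ofReal_ne_zero.2 (ne_of_gt ht))
  simp [mul_div_cancel_left₀ _ (pow_ne_zero k this)]

lemma X_pow_natTrailingDegree_dvd_map {R S : Type*} [Semiring R] [Semiring S] (f : R →+* S)
    (p : R[X]) : X ^ p.natTrailingDegree ∣ p.map f :=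
  X_pow_dvd_iff.2 fun d hd => by rw [coeff_map, coeff_eq_zero_of_lt_natTrailingDegree hd, map_zero]

end Polynomial

lemma im_add_smul_apply_pos {σ : Type*} [Fintype σ] {ζ v : σ → ℂ} {s : ℂ} {ε : ℝ}
    (hζ : ∀ i, ε ≤ (ζ i).im) (h : ‖s‖ * ‖v‖ < ε) (i : σ) : 0 < ((ζ + s • v) i).im := by
  have : ‖s * v i‖ < ε := by
    rw [norm_mul]
    exact (mul_le_mul_of_nonneg_left (norm_le_pi_norm v i) (norm_nonneg s)).trans_lt h
  simp only [Pi.add_apply, Pi.smul_apply, smul_eq_mul, add_im]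
  linarith [hζ i, neg_abs_le (s * v i).im, abs_im_le_norm (s * v i)]

lemma Complex.eq_zero_of_tendsto_of_norm_le {ι : Type*} {l : Filter ι} [l.NeBot] {g : ℂ → ℂ}
    {h : ι → ℂ → ℂ} {R : ℝ} {s : ℂ} (hs : s ∈ ball (0 : ℂ) R)
    (hg : DifferentiableOn ℂ g (ball 0 R)) (hg0 : g 0 = 0)
    (hh : ∀ᶠ i in l, DifferentiableOn ℂ (h i) (ball 0 R) ∧
      ∀ z ∈ ball (0 : ℂ) R, h i z ≠ 0 ∧ ‖g z‖ ≤ ‖h i z‖)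
    (hlim : Tendsto (fun i => h i s) l (𝓝 (g s))) : g s = 0 := by
  have hR : 0 < R := pos_of_mem_ball hs
  -- Schwarz's lemma for `g / h i`, which maps the disc into the closed unit disc and `0` to `0`.
  have hschwarz : ∀ᶠ i in l, ‖g s‖ ≤ ‖s‖ / R * ‖h i s‖ := hh.mono fun i ⟨hd, hi⟩ => by
    have hmaps : MapsTo (fun z => g z / h i z) (ball 0 R) (closedBall (g 0 / h i 0) 1) :=
      fun z hz => by
        simpa [hg0, norm_div] using div_le_one_of_le₀ (hi z hz).2 (norm_nonneg _)
    have := Complex.dist_le_div_mul_dist_of_mapsTo_ball (hg.div hd fun z hz => (hi z hz).1)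
      hmaps hs
    rw [Pi.div_apply, Pi.div_apply, hg0, zero_div, dist_zero_right, dist_zero_right, norm_div,
      div_le_iff₀ (norm_pos_iff.2 (hi s hs).1)] at this
    rwa [one_div_mul_eq_div] at this
  have hle : ‖g s‖ ≤ ‖s‖ / R * ‖g s‖ := ge_of_tendsto (hlim.norm.const_mul _) hschwarz
  have hsR : ‖s‖ / R < 1 := (div_lt_one hR).2 (mem_ball_zero_iff.1 hs)
  exact norm_le_zero_iff.1 (by nlinarith [norm_nonneg (g s)])

namespace MvPolynomial

section filter

variable {σ R : Type*} [CommSemiring R] (P : (σ →₀ ℕ) → Prop) [DecidablePred P]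

noncomputable def filter (F : MvPolynomial σ R) : MvPolynomial σ R :=
  ∑ m ∈ F.support.filter P, monomial m (F.coeff m)

lemma coeff_filter (F : MvPolynomial σ R) (m : σ →₀ ℕ) :
    (F.filter P).coeff m = if P m then F.coeff m else 0 := by
  classical
  simp only [filter, coeff_sum, coeff_monomial, Finset.sum_ite_eq', Finset.mem_filter,
    mem_support_iff]
  by_cases h : F.coeff m = 0 <;> simp [h]

@[simp] lemma filter_zero : (0 : MvPolynomial σ R).filter P = 0 := by
  simp [filter]

lemma filter_add (F G : MvPolynomial σ R) : (F + G).filter P = F.filter P + G.filter P := by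
  ext m
  simp only [coeff_filter, coeff_add]
  split_ifs <;> simp

lemma filter_monomial (m : σ →₀ ℕ) (c : R) :
    (monomial m c).filter P = if P m then monomial m c else 0 := by
  classical
  ext m'
  by_cases h : m = m'
  · subst h; split_ifs <;> simp [coeff_filter, *]
  · split_ifs <;> simp [coeff_filter, coeff_monomial, h]

end filter

section toPolynomialIn

variable {σ R : Type*} [CommSemiring R] [DecidableEq σ]

noncomputable def toPolynomialIn (j : σ) :
    MvPolynomial σ R →ₐ[R] Polynomial (MvPolynomial σ R) :=
  aeval (Function.update (fun i => Polynomial.C (X i)) j Polynomial.X)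

@[simp] lemma toPolynomialIn_C (j : σ) (c : R) :
    toPolynomialIn j (C c) = Polynomial.C (C c) := by
  simp [toPolynomialIn]

@[simp] lemma toPolynomialIn_X_self (j : σ) : toPolynomialIn (R := R) j (X j) = Polynomial.X := by
  simp [toPolynomialIn]

@[simp] lemma toPolynomialIn_X_of_ne {i j : σ} (h : i ≠ j) :
    toPolynomialIn (R := R) j (X i) = Polynomial.C (X i) := by
  simp [toPolynomialIn, h]

lemma toPolynomialIn_monomial (j : σ) (m : σ →₀ ℕ) (c : R) :
    toPolynomialIn j (monomial m c) =
      Polynomial.C (monomial (m.erase j) c) * Polynomial.X ^ m j := by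
  have : monomial m c = monomial (m.erase j) c * X j ^ m j := by
    rw [X_pow_eq_monomial, monomial_mul, mul_one, Finsupp.erase_add_single]
  rw [this, map_mul, map_pow, toPolynomialIn_X_self, toPolynomialIn, aeval_monomial,
    monomial_eq, map_mul, Polynomial.algebraMap_apply, algebraMap_eq, Finsupp.prod, Finsupp.prod,
    map_prod]
  congr 2
  refine Finset.prod_congr rfl fun i hi => ?_
  have hij : i ≠ j := by rintro rfl; simp at hi
  rw [Function.update_of_ne hij, map_pow]

lemma eval₂_toPolynomialIn (j : σ) (z : σ → R) (w : R) (F : MvPolynomial σ R) :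
    (toPolynomialIn j F).eval₂ (eval z) w = eval (Function.update z j w) F := by
  induction F using MvPolynomial.induction_on with
  | C a => simp
  | add p q hp hq => simp [hp, hq]
  | mul_X p i hp =>
    by_cases h : i = j
    · subst h; simp [hp]
    · simp [hp, h]

lemma eval_map_toPolynomialIn (j : σ) (z : σ → R) (w : R) (F : MvPolynomial σ R) :
    ((toPolynomialIn j F).map (eval z)).eval w = eval (Function.update z j w) F := by
  rw [Polynomial.eval_map, eval₂_toPolynomialIn]

lemma eval_X_toPolynomialIn (j : σ) (F : MvPolynomial σ R) :
    (toPolynomialIn j F).eval (X j) = F := by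
  induction F using MvPolynomial.induction_on with
  | C a => simp
  | add p q hp hq => simp [hp, hq]
  | mul_X p i hp =>
    by_cases h : i = j
    · subst h; simp [hp]
    · simp [hp, h]

lemma toPolynomialIn_injective (j : σ) : Function.Injective (toPolynomialIn (R := R) j) :=
  Function.LeftInverse.injective (eval_X_toPolynomialIn j)

lemma toPolynomialIn_filter_le_one (j : σ) (F : MvPolynomial σ R) :
    toPolynomialIn j (F.filter fun m => m j ≤ 1) =
      Polynomial.C ((toPolynomialIn j F).coeff 0) +
        Polynomial.C ((toPolynomialIn j F).coeff 1) * Polynomial.X := by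
  induction F using MvPolynomial.induction_on' with
  | monomial m c =>
    rw [filter_monomial, toPolynomialIn_monomial]
    rcases Nat.lt_or_ge (m j) 2 with h | h
    · interval_cases hm : m j <;> simp [toPolynomialIn_monomial, hm]
    · rw [if_neg (by omega), Polynomial.coeff_C_mul_X_pow, Polynomial.coeff_C_mul_X_pow,
        if_neg (by omega), if_neg (by omega)]
      simp
  | add p q hp hq =>
    simp only [filter_add, map_add, hp, hq, Polynomial.coeff_add]
    ring

end toPolynomialIn

lemma differentiable_eval_comp {σ : Type*} [Fintype σ] (p : MvPolynomial σ ℂ) {f : ℂ → σ → ℂ}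
    (hf : Differentiable ℂ f) : Differentiable ℂ fun s => eval (f s) p := fun s =>
  ((AnalyticOnNhd.eval_mvPolynomial p) (f s) (mem_univ _)).differentiableAt.comp s (hf s)

variable {σ : Type*}

def IsStable (F : MvPolynomial σ ℂ) : Prop :=
  ∀ z : σ → ℂ, (∀ i, 0 < (z i).im) → eval z F ≠ 0

noncomputable def multiAffinePart [Fintype σ] (F : MvPolynomial σ ℂ) : MvPolynomial σ ℂ :=
  F.filter fun m => ∀ j, m j ≤ 1

namespace IsStable

variable {F : MvPolynomial σ ℂ}

lemma ne_zero (hF : F.IsStable) : F ≠ 0 := by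
  rintro rfl
  exact hF (fun _ => I) (fun _ => by simp) (map_zero _)

variable [DecidableEq σ]

lemma map_eval_toPolynomialIn (hF : F.IsStable) (j : σ) {z : σ → ℂ}
    (hz : ∀ i, 0 < (z i).im) : ((toPolynomialIn j F).map (eval z)).IsStable := fun w hw => by
  rw [eval_map_toPolynomialIn]
  refine hF _ fun i => ?_
  by_cases h : i = j
  · subst h; simpa using hw
  · simpa [h] using hz i

lemma eval_trailingCoeff_eq_zero_of_mem_ball [Fintype σ] (hF : F.IsStable) (j : σ)
    {ζ : σ → ℂ} {ε : ℝ} (hε : ∀ i, ε ≤ (ζ i).im)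
    (hzero : eval ζ (toPolynomialIn j F).trailingCoeff = 0) {x : σ → ℂ}
    (hx : x ∈ ball ζ (ε / 2)) : eval x (toPolynomialIn j F).trailingCoeff = 0 := by
  set k := (toPolynomialIn j F).natTrailingDegree
  set line : ℂ → σ → ℂ := fun s => ζ + s • (x - ζ)
  have hline (s : ℂ) (hs : s ∈ ball (0 : ℂ) 2) (i : σ) : 0 < (line s i).im := by
    refine im_add_smul_apply_pos hε ?_ i
    rw [mem_ball, dist_eq_norm] at hx
    nlinarith [mem_ball_zero_iff.1 hs, norm_nonneg s, norm_nonneg (x - ζ)]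
  have hupd (t : ℝ) : Differentiable ℂ fun s => Function.update (line s) j (I * t) := by
    refine differentiable_pi.2 fun i => ?_
    by_cases h : i = j
    · subst h; simp
    · simp only [Function.update_of_ne h, line]; fun_prop
  have key := Complex.eq_zero_of_tendsto_of_norm_le (s := 1) (R := 2) (l := 𝓝[>] (0 : ℝ))
    (g := fun s => eval (line s) (toPolynomialIn j F).trailingCoeff)
    (h := fun t s => eval (Function.update (line s) j (I * t)) F / (I * t) ^ k)
    (by simp) (differentiable_eval_comp _ (by fun_prop)).differentiableOn
    (by simpa [line] using hzero) ?_ ?_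
  · simpa [line] using key
  · filter_upwards [self_mem_nhdsWithin] with t (ht : 0 < t)
    have hIt : I * t ≠ 0 := mul_ne_zero I_ne_zero (ofReal_ne_zero.2 ht.ne')
    refine ⟨((differentiable_eval_comp F (hupd t)).div_const _).differentiableOn,
      fun s hs => ⟨div_ne_zero ?_ (pow_ne_zero _ hIt), ?_⟩⟩
    · rw [← eval_map_toPolynomialIn]
      exact hF.map_eval_toPolynomialIn j (hline s hs) _ (by simpa using ht)
    · have := (hF.map_eval_toPolynomialIn j (hline s hs)).norm_coeff_mul_pow_le
        (Polynomial.X_pow_natTrailingDegree_dvd_map _ _) ht.le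
      rw [Polynomial.coeff_map, eval_map_toPolynomialIn] at this
      rw [norm_div, norm_pow, norm_mul, norm_I, one_mul, norm_real, Real.norm_of_nonneg ht.le,
        le_div_iff₀ (pow_pos ht k)]
      exact this
  · have := Polynomial.tendsto_eval_I_mul_div_pow
      (Polynomial.X_pow_natTrailingDegree_dvd_map (eval (line 1)) (toPolynomialIn j F))
    rw [Polynomial.coeff_map] at this
    simp only [eval_map_toPolynomialIn] at this
    exact this

lemma eval_trailingCoeff_toPolynomialIn_ne_zero [Fintype σ] (hF : F.IsStable) (j : σ)
    {ζ : σ → ℂ} (hζ : ∀ i, 0 < (ζ i).im) : eval ζ (toPolynomialIn j F).trailingCoeff ≠ 0 := by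
  intro hzero
  obtain ⟨ε, hε, hεle⟩ : ∃ ε > 0, ∀ i, ε ≤ (ζ i).im :=
    ⟨Finset.univ.inf' ⟨j, Finset.mem_univ j⟩ fun i => (ζ i).im,
      (Finset.lt_inf'_iff _).2 fun i _ => hζ i, fun i => Finset.inf'_le _ (Finset.mem_univ i)⟩
  have hnear : (eval · (toPolynomialIn j F).trailingCoeff) =ᶠ[𝓝 ζ] 0 :=
    eventually_of_mem (ball_mem_nhds ζ (half_pos hε)) fun x hx =>
      hF.eval_trailingCoeff_eq_zero_of_mem_ball j hεle hzero hx
  have hg : (toPolynomialIn j F).trailingCoeff = 0 := MvPolynomial.funext fun x => by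
    simpa using (AnalyticOnNhd.eval_mvPolynomial _).eqOn_zero_of_preconnected_of_eventuallyEq_zero
      isPreconnected_univ (mem_univ ζ) hnear (mem_univ x)
  exact hF.ne_zero ((toPolynomialIn_injective j).eq_iff' (map_zero _) |>.1
    (Polynomial.trailingCoeff_eq_zero.1 hg))

lemma filter_le_one [Fintype σ] (hF : F.IsStable) (j : σ) :
    (F.filter fun m => m j ≤ 1).IsStable ∨ F.filter (fun m => m j ≤ 1) = 0 := by
  have hP := toPolynomialIn_filter_le_one j F
  set P := toPolynomialIn j F
  have htrail {z : σ → ℂ} (hz : ∀ i, 0 < (z i).im) : eval z (P.coeff P.natTrailingDegree) ≠ 0 :=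
    hF.eval_trailingCoeff_toPolynomialIn_ne_zero j hz
  rcases lt_or_ge P.natTrailingDegree 2 with hk | hk
  · left
    intro z hz
    have heval : eval z (F.filter fun m => m j ≤ 1) =
        eval z (P.coeff 0) + eval z (P.coeff 1) * z j := by
      rw [← Function.update_eq_self j z, ← eval₂_toPolynomialIn, hP, Function.update_eq_self]
      simp
    rw [heval]
    interval_cases hk0 : P.natTrailingDegree
    · have h0 : (P.map (eval z)).coeff 0 ≠ 0 := by
        simpa [Polynomial.coeff_map, hk0] using htrail hz
      simpa [Polynomial.coeff_map] using
        (hF.map_eval_toPolynomialIn j hz).coeff_zero_add_coeff_one_mul_ne_zero h0 (hz j)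
    · rw [Polynomial.coeff_eq_zero_of_lt_natTrailingDegree (by omega), map_zero, zero_add]
      refine mul_ne_zero (by simpa [hk0] using htrail hz) fun h => ?_
      simpa [h] using hz j
  · right
    apply toPolynomialIn_injective j
    rw [hP, Polynomial.coeff_eq_zero_of_lt_natTrailingDegree (by omega),
      Polynomial.coeff_eq_zero_of_lt_natTrailingDegree (by omega)]
    simp

lemma filter_forall_mem_le_one [Fintype σ] (hF : F.IsStable) (S : Finset σ) :
    (F.filter fun m => ∀ j ∈ S, m j ≤ 1).IsStable ∨
      F.filter (fun m => ∀ j ∈ S, m j ≤ 1) = 0 := by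
  induction S using Finset.induction_on with
  | empty =>
    left
    convert hF
    ext m
    simp [coeff_filter]
  | insert a S _ ih =>
    have hsplit : F.filter (fun m => ∀ j ∈ insert a S, m j ≤ 1) =
        (F.filter fun m => ∀ j ∈ S, m j ≤ 1).filter fun m => m a ≤ 1 := by
      ext m
      simp only [coeff_filter, Finset.forall_mem_insert]
      split_ifs <;> tauto
    rcases ih with h | h
    · rw [hsplit]
      exact h.filter_le_one a
    · right
      rw [hsplit, h, filter_zero]

theorem multiAffinePart [Fintype σ] (hF : F.IsStable) :
    F.multiAffinePart.IsStable ∨ F.multiAffinePart = 0 := by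
  have h : F.multiAffinePart = F.filter fun m => ∀ j ∈ Finset.univ, m j ≤ 1 := by
    ext m
    simp [MvPolynomial.multiAffinePart, coeff_filter]
  rw [h]
  exact hF.filter_forall_mem_le_one Finset.univ

end IsStable

end MvPolynomial

/-- **Corollary (the multi-affine part of a stable polynomial is stable).**
Let `f` be a stable complex polynomial in `z_1,…,z_d` and let `f_ma` be its
multi-affine part: the sum of the terms of `f` whose monomials are square-free.
Then `f_ma` is stable or identically zero. -/
theorem stmt13 (d : ℕ) (f : MvPolynomial (Fin d) ℂ)
    (hf : ∀ z : Fin d → ℂ, (∀ j, 0 < (z j).im) → MvPolynomial.eval z f ≠ 0) :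
    (∀ z : Fin d → ℂ, (∀ j, 0 < (z j).im) →
        MvPolynomial.eval z
          (∑ m ∈ f.support.filter (fun m => ∀ j, m j ≤ 1),
            MvPolynomial.monomial m (f.coeff m)) ≠ 0) ∨
      (∑ m ∈ f.support.filter (fun m => ∀ j, m j ≤ 1),
          MvPolynomial.monomial m (f.coeff m)) = 0 := by
  have h := MvPolynomial.IsStable.multiAffinePart (F := f) hf
  unfold MvPolynomial.multiAffinePart MvPolynomial.filter MvPolynomial.IsStable at h
  convert h
end

section
/- Let A_1, …, A_d be complex positive semidefinite n × n matrices and let B be a complex Hermitian n × n matrix. Then the polynomial f(z_1,…,z_d) := det(z_1 A_1 + ⋯ + z_d A_d + B) is either identically zero or a real stable polynomial (all coefficients real and f nonvanishing whenever all Im(z_j) > 0). If moreover B is positive semidefinite, then all coefficients of f are nonnegative. -/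
/-!
Suppose `f(z) = 0` with every `Im zⱼ > 0` and take `v ≠ 0` in the kernel of `∑ zⱼ Aⱼ + B`.
Then `∑ zⱼ (v* Aⱼ v) + v* B v = 0` with every `v* Aⱼ v ≥ 0` and `v* B v` real, so the imaginary
part `∑ Im zⱼ (v* Aⱼ v) = 0` forces `Aⱼ v = 0` for all `j`, and then `B v = 0`. Such a common
kernel vector kills the whole pencil, so `f ≡ 0`. The coefficients are real because conjugating
them amounts to transposing the Hermitian pencil.

If also `B ⪰ 0`, write every `Aⱼ` and `B` as a Gram matrix `Lᴴ L`, so the pencil becomes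
`Vᴴ D V` with `D` diagonal with monomial entries. Expanding the determinant row by row makes a
coefficient of `f` a sum over maps `φ` from rows to rows of `V`; averaging over permutations of
the rows regroups it as `(1 / n!) ∑ |det V_φ|² ≥ 0`, where `V_φ` is the square matrix of the rows
of `V` picked by `φ`.
-/

open scoped ComplexOrder
open MvPolynomial Matrix

namespace Matrix

variable {ι Q σ : Type*} [Fintype ι] [Fintype Q] [Fintype σ]

theorem mulVec_eq_zero_of_sum_smul_add_mulVec_eq_zero {A : σ → Matrix ι ι ℂ}
    {B : Matrix ι ι ℂ} (hA : ∀ j, (A j).PosSemidef) (hB : B.IsHermitian) {z : σ → ℂ}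
    (hz : ∀ j, 0 < (z j).im) {v : ι → ℂ}
    (hv : (∑ j, z j • A j + B) *ᵥ v = 0) (j : σ) : A j *ᵥ v = 0 := by
  set c : σ → ℂ := fun j => star v ⬝ᵥ A j *ᵥ v
  have hc (j : σ) : 0 ≤ c j := (hA j).dotProduct_mulVec_nonneg v
  have h_zero : ∑ j, z j * c j + star v ⬝ᵥ B *ᵥ v = 0 := by
    simpa [add_mulVec, sum_mulVec, smul_mulVec, dotProduct_add, dotProduct_sum] using
      congrArg (star v ⬝ᵥ ·) hv
  have hcB : (star v ⬝ᵥ B *ᵥ v).im = 0 := by simpa using hB.im_star_dotProduct_mulVec_self v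
  have h_im : ∑ j, (z j).im * (c j).re = 0 := by
    simpa [Complex.im_sum, Complex.mul_im, (Complex.nonneg_iff.mp (hc _)).2.symm, hcB] using
      congrArg Complex.im h_zero
  have h_re : (c j).re = 0 := by
    have := (Finset.sum_eq_zero_iff_of_nonneg fun i _ =>
      mul_nonneg (hz i).le (Complex.nonneg_iff.mp (hc i)).1).mp h_im j (Finset.mem_univ j)
    exact (mul_eq_zero.mp this).resolve_left (hz j).ne'
  exact ((hA j).dotProduct_mulVec_zero_iff v).mp
    (Complex.ext h_re (Complex.nonneg_iff.mp (hc j)).2.symm)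

variable [DecidableEq ι]

theorem det_of_sum_smul {R : Type*} [CommRing R] (c : Q → ι → R) (v : Q → ι → R) :
    det (of fun a => ∑ q, c q a • v q)
      = ∑ φ : ι → Q, (∏ a, c (φ a) a) * det (of fun a => v (φ a)) :=
  (detRowAlternating.toMultilinearMap.map_sum fun a q => c q a • v q).trans <|
    Finset.sum_congr rfl fun _ _ => detRowAlternating.toMultilinearMap.map_smul_univ _ _

theorem sum_star_prod_mul_det_submatrix_nonneg (V : Matrix Q ι ℂ) (P : (ι → Q) → Prop)
    [DecidablePred P] (hP : ∀ (φ : ι → Q) (π : Equiv.Perm ι), P (φ ∘ π) ↔ P φ) :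
    0 ≤ ∑ φ with P φ, star (∏ a, V (φ a) a) * det (V.submatrix φ id) := by
  set F : (ι → Q) → ℂ := fun φ => star (∏ a, V (φ a) a) * det (V.submatrix φ id)
  have h_orbit (φ : ι → Q) : ∑ π : Equiv.Perm ι, F (φ ∘ π)
      = star (det (V.submatrix φ id)) * det (V.submatrix φ id) := by
    set M := V.submatrix φ id
    calc ∑ π : Equiv.Perm ι, F (φ ∘ π)
        = ∑ π : Equiv.Perm ι, star ((Equiv.Perm.sign π : ℂ) * ∏ a, M (π a) a) * det M := by
          refine Finset.sum_congr rfl fun π _ => ?_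
          have h_perm : det (V.submatrix (φ ∘ π) id) = Equiv.Perm.sign π * det M :=
            det_permute π M
          simp only [F, h_perm]
          simp [M]
          ring
      _ = star (det M) * det M := by rw [← Finset.sum_mul, ← star_sum, ← det_apply']
  have h_reindex (π : Equiv.Perm ι) : ∑ φ with P φ, F φ = ∑ φ with P φ, F (φ ∘ π) := by
    simp only [Finset.sum_filter]
    refine (Fintype.sum_equiv (Equiv.arrowCongr π⁻¹ (Equiv.refl Q)) _ _ fun φ => ?_).symm
    change _ = if P (φ ∘ π) then F (φ ∘ π) else 0
    simp only [hP]
  have h_sum : (Fintype.card (Equiv.Perm ι) : ℂ) * ∑ φ with P φ, F φ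
      = ∑ φ with P φ, star (det (V.submatrix φ id)) * det (V.submatrix φ id) := by
    rw [← nsmul_eq_mul, ← Finset.card_univ, ← Finset.sum_const,
      Finset.sum_congr rfl fun π _ => h_reindex π, Finset.sum_comm]
    exact Finset.sum_congr rfl fun φ _ => h_orbit φ
  have h_card : (0 : ℂ) < Fintype.card (Equiv.Perm ι) := by exact_mod_cast Fintype.card_pos
  have h_nonneg := Finset.sum_nonneg fun φ (_ : φ ∈ Finset.univ.filter P) =>
    star_mul_self_nonneg (det (V.submatrix φ id))
  rw [← h_sum] at h_nonneg
  simpa [inv_mul_cancel_left₀ h_card.ne'] using mul_nonneg (inv_nonneg.mpr h_card.le) h_nonneg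

open scoped MatrixOrder Matrix.Norms.L2Operator in
theorem PosSemidef.exists_eq_conjTranspose_mul_self {M : Matrix ι ι ℂ} (hM : M.PosSemidef) :
    ∃ L : Matrix ι ι ℂ, M = Lᴴ * L :=
  CStarAlgebra.nonneg_iff_eq_star_mul_self.mp hM.nonneg

end Matrix

section WeightedGram

variable {ι Q σ : Type*} [Fintype ι] [Fintype Q]

/-- The matrix `Vᴴ · diagonal (fun q => X ^ w q) · V`. -/
noncomputable def weightedGram (V : Matrix Q ι ℂ) (w : Q → σ →₀ ℕ) :
    Matrix ι ι (MvPolynomial σ ℂ) :=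
  of fun a b => ∑ q, monomial (w q) (star (V q a) * V q b)

variable [DecidableEq ι]

theorem det_weightedGram (V : Matrix Q ι ℂ) (w : Q → σ →₀ ℕ) :
    det (weightedGram V w) = ∑ φ : ι → Q,
      monomial (∑ a, w (φ a)) (star (∏ a, V (φ a) a) * det (V.submatrix φ id)) := by
  have h_rows : weightedGram V w
      = of fun a => ∑ q, monomial (w q) (star (V q a)) • fun b => C (V q b) := by
    ext a b
    simp [weightedGram, C_mul_monomial, mul_comm]
  rw [h_rows, det_of_sum_smul]
  refine Finset.sum_congr rfl fun φ _ => ?_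
  have h_det : det (of fun a b => C (V (φ a) b))
      = (C (det (V.submatrix φ id)) : MvPolynomial σ ℂ) :=
    (RingHom.map_det C _).symm
  rw [← monomial_sum_prod, star_prod, h_det, mul_comm, C_mul_monomial, mul_comm]

theorem coeff_det_weightedGram_nonneg (V : Matrix Q ι ℂ) (w : Q → σ →₀ ℕ) (m : σ →₀ ℕ) :
    0 ≤ coeff m (det (weightedGram V w)) := by
  classical
  rw [det_weightedGram, coeff_sum]
  simp only [coeff_monomial]
  rw [← Finset.sum_filter]
  refine sum_star_prod_mul_det_submatrix_nonneg V _ fun φ π => ?_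
  rw [Function.comp_def, Equiv.sum_comp π fun a => w (φ a)]

end WeightedGram

section LinearPencil

variable {ι σ : Type*} [Fintype ι] [Fintype σ]

noncomputable def linearPencil (A : σ → Matrix ι ι ℂ) (B : Matrix ι ι ℂ) :
    Matrix ι ι (MvPolynomial σ ℂ) :=
  of fun a b => (∑ j, X j * C (A j a b)) + C (B a b)

variable {A : σ → Matrix ι ι ℂ} {B : Matrix ι ι ℂ}

theorem linearPencil_mulVec_C (v : ι → ℂ) :
    linearPencil A B *ᵥ (C ∘ v) = fun a => ∑ j, X j * C ((A j *ᵥ v) a) + C ((B *ᵥ v) a) := by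
  funext a
  simp only [linearPencil, mulVec, dotProduct, of_apply, Function.comp_apply, add_mul,
    Finset.sum_add_distrib, Finset.sum_mul, mul_assoc, ← C_mul, map_sum, Finset.mul_sum]
  rw [Finset.sum_comm]

variable [DecidableEq ι]

theorem eval_det_linearPencil (z : σ → ℂ) :
    eval z (det (linearPencil A B)) = det (∑ j, z j • A j + B) := by
  rw [RingHom.map_det]
  congr 1
  ext a b
  simp [linearPencil, Matrix.sum_apply, mul_comm]

theorem map_star_det_linearPencil (hA : ∀ j, (A j).IsHermitian)
    (hB : B.IsHermitian) :
    MvPolynomial.map (starRingEnd ℂ) (det (linearPencil A B)) = det (linearPencil A B) := by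
  rw [RingHom.map_det, ← det_transpose (linearPencil A B)]
  congr 1
  ext a b
  simp [linearPencil, ← (hA _).apply a b, ← hB.apply a b]

theorem im_coeff_det_linearPencil (hA : ∀ j, (A j).IsHermitian)
    (hB : B.IsHermitian) (m : σ →₀ ℕ) : (coeff m (det (linearPencil A B))).im = 0 :=
  Complex.conj_eq_iff_im.mp <| by rw [← coeff_map, map_star_det_linearPencil hA hB]

theorem det_linearPencil_eq_zero {v : ι → ℂ} (hv : v ≠ 0)
    (hA : ∀ j, A j *ᵥ v = 0) (hB : B *ᵥ v = 0) : det (linearPencil A B) = 0 := by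
  rw [← exists_mulVec_eq_zero_iff]
  refine ⟨C ∘ v, fun h => hv (funext fun i => C_injective σ ℂ (by simpa using congrFun h i)),
    ?_⟩
  simp [linearPencil_mulVec_C, hA, hB, Pi.zero_def]

theorem eval_det_linearPencil_ne_zero (hA : ∀ j, (A j).PosSemidef)
    (hB : B.IsHermitian) (hP : det (linearPencil A B) ≠ 0) {z : σ → ℂ}
    (hz : ∀ j, 0 < (z j).im) : eval z (det (linearPencil A B)) ≠ 0 := by
  rw [eval_det_linearPencil]
  intro h_sing
  obtain ⟨v, hv0, hv⟩ := exists_mulVec_eq_zero_iff.mpr h_sing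
  have hAv := mulVec_eq_zero_of_sum_smul_add_mulVec_eq_zero hA hB hz hv
  have hBv : B *ᵥ v = 0 := by simpa [add_mulVec, sum_mulVec, smul_mulVec, hAv] using hv
  exact hP (det_linearPencil_eq_zero hv0 hAv hBv)

theorem linearPencil_eq_weightedGram (hA : ∀ j, (A j).PosSemidef) (hB : B.PosSemidef) :
    ∃ V : Matrix (Option σ × ι) ι ℂ,
      linearPencil A B = weightedGram V fun q => q.1.elim 0 fun j => Finsupp.single j 1 := by
  have h_gram (o : Option σ) : ∃ L : Matrix ι ι ℂ, o.elim B A = Lᴴ * L :=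
    (o.rec hB hA : (o.elim B A).PosSemidef).exists_eq_conjTranspose_mul_self
  choose L hL using h_gram
  refine ⟨fun q => L q.1 q.2, ?_⟩
  have h_entry (o : Option σ) (a b : ι) :
      ∑ k, monomial (o.elim 0 fun j => Finsupp.single j 1) (star (L o k a) * L o k b)
        = (monomial (o.elim 0 fun j => Finsupp.single j 1) (o.elim B A a b)
          : MvPolynomial σ ℂ) := by
    rw [hL o, mul_apply, map_sum]
    rfl
  refine Matrix.ext fun a b => ?_
  simp only [weightedGram, of_apply, Fintype.sum_prod_type, h_entry]
  simp only [Fintype.sum_option, linearPencil, of_apply, Option.elim, monomial_zero', add_comm,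
    mul_comm (X _), C_mul_X_eq_monomial]

theorem coeff_det_linearPencil_nonneg (hA : ∀ j, (A j).PosSemidef)
    (hB : B.PosSemidef) (m : σ →₀ ℕ) : 0 ≤ coeff m (det (linearPencil A B)) := by
  obtain ⟨V, hV⟩ := linearPencil_eq_weightedGram hA hB
  rw [hV]
  exact coeff_det_weightedGram_nonneg V _ m

end LinearPencil

/-- **Proposition (determinantal polynomials are real stable).**
Let `A_1, …, A_d` be complex positive semidefinite `n × n` matrices and `B` a complex
Hermitian `n × n` matrix.  Then `f(z) := det(z_1 A_1 + ⋯ + z_d A_d + B)` is either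
identically zero or real stable (all coefficients real, and nonvanishing whenever all
`Im(z_j) > 0`).  If moreover `B` is positive semidefinite, then all coefficients of `f`
are (real and) nonnegative. -/
theorem stmt17 (d n : ℕ) (A : Fin d → Matrix (Fin n) (Fin n) ℂ)
    (hA : ∀ j, (A j).PosSemidef) (B : Matrix (Fin n) (Fin n) ℂ) (hB : B.IsHermitian)
    (f : MvPolynomial (Fin d) ℂ)
    (hf : f = Matrix.det (Matrix.of fun a b =>
      (∑ j, MvPolynomial.X j * MvPolynomial.C (A j a b)) + MvPolynomial.C (B a b))) :
    (f = 0 ∨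
      ((∀ m, (f.coeff m).im = 0) ∧
        ∀ z : Fin d → ℂ, (∀ j, 0 < (z j).im) → MvPolynomial.eval z f ≠ 0)) ∧
    (B.PosSemidef → ∀ m, (f.coeff m).im = 0 ∧ 0 ≤ (f.coeff m).re) := by
  change f = det (linearPencil A B) at hf
  subst hf
  refine ⟨?_, fun hB_psd m => ?_⟩
  · by_cases hf0 : det (linearPencil A B) = 0
    · exact Or.inl hf0
    · exact Or.inr ⟨im_coeff_det_linearPencil (fun j => (hA j).isHermitian) hB,
        fun z hz => eval_det_linearPencil_ne_zero hA hB hf0 hz⟩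
  · obtain ⟨h_re, h_im⟩ := Complex.nonneg_iff.mp (coeff_det_linearPencil_nonneg hA hB_psd m)
    exact ⟨h_im.symm, h_re⟩
end
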